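/- Let P₁, P₂, P₃ ⊆ ℝ² be the three closed 120° sectors centered at the origin, P_m = {(r cos φ, r sin φ) : r ≥ 0, φ ∈ [2π(m−1)/3 − π/3, 2π(m−1)/3 + π/3]} for m ∈ {1,2,3}, and set Aᵢ = Pᵢ × ℝ ⊆ ℝ³. Then ∑_{i=1}^3 ‖∫_{Aᵢ} x dγ₃(x)‖₂² = 9/(8π); in particular the bound 9/(8π) in the Propeller inequality is attained by the propeller partition. -/

import Mathlib

/-!
The Gaussian density factorises as `e^{-(x₀² + x₁²)/2} · e^{-x₂²/2}`, so the Gaussian barycentre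
of a vertical cylinder `P × ℝ` has no vertical component, and its horizontal part is
`(2π)⁻¹ ∫_P y e^{-|y|²/2} dy`. For the wedge of angles `[a, b]`, polar coordinates split this
integral into `∫₀^∞ r² e^{-r²/2} dr = √(2π)/2` times `∫_a^b (cos φ, sin φ) dφ`, a vector of squared
length `2 - 2 cos (b - a)`. Each `120°` sector therefore contributes
`(1 - cos (2π/3)) / (4π) = 3/(8π)`.
-/

open MeasureTheory Real

noncomputable section

abbrev E3 := EuclideanSpace ℝ (Fin 3)

/-- The standard Gaussian measure on `ℝ³`, with density
`x ↦ (2π)^{-3/2} exp(-‖x‖²/2)` with respect to Lebesgue measure. -/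
def gaussian3 : Measure E3 :=
  (volume : Measure E3).withDensity fun x =>
    ENNReal.ofReal ((Real.sqrt ((2 * Real.pi) ^ 3))⁻¹ * Real.exp (-‖x‖ ^ 2 / 2))

open Set

def wedge (a b : ℝ) : Set (ℝ × ℝ) := polarCoord.symm '' (Ici 0 ×ˢ Icc a b)

lemma mem_wedge {a b : ℝ} {q : ℝ × ℝ} :
    q ∈ wedge a b ↔ ∃ r, 0 ≤ r ∧ ∃ φ ∈ Icc a b, q.1 = r * cos φ ∧ q.2 = r * sin φ := by
  simp [wedge, polarCoord_symm_apply, Prod.ext_iff, eq_comm, and_assoc]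

lemma polarCoord_symm_fst_sq_add_snd_sq (p : ℝ × ℝ) :
    (polarCoord.symm p).1 ^ 2 + (polarCoord.symm p).2 ^ 2 = p.1 ^ 2 := by
  rw [polarCoord_symm_apply, mul_pow, mul_pow, ← mul_add, cos_sq_add_sin_sq, mul_one]

lemma injOn_polarCoord_symm_Ioi_prod_Icc {a b : ℝ} (hab : b - a < 2 * π) :
    InjOn polarCoord.symm (Ioi 0 ×ˢ Icc a b) := by
  rintro ⟨r, φ⟩ ⟨hr, hφ⟩ ⟨s, ψ⟩ ⟨hs, hψ⟩ h
  have hrs : r = s := by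
    have := congrArg (fun q : ℝ × ℝ => q.1 ^ 2 + q.2 ^ 2) h
    simp only [polarCoord_symm_fst_sq_add_snd_sq] at this
    exact (pow_left_inj₀ (le_of_lt hr) (le_of_lt hs) two_ne_zero).mp this
  subst hrs
  simp only [polarCoord_symm_apply, Prod.mk.injEq] at h
  have hcos := mul_left_cancel₀ (ne_of_gt hr) h.1
  have hsin := mul_left_cancel₀ (ne_of_gt hr) h.2
  have hcos_sub : cos (φ - ψ) = 1 := by
    rw [cos_sub, hcos, hsin, ← sq, ← sq, cos_sq_add_sin_sq]
  have := (cos_eq_one_iff_of_lt_of_lt (by linarith [hφ.1, hψ.2]) (by linarith [hφ.2, hψ.1])).mp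
    hcos_sub
  rw [sub_eq_zero.mp this]

lemma wedge_ae_eq_image (a b : ℝ) :
    wedge a b =ᵐ[volume] polarCoord.symm '' (Ioi 0 ×ˢ Icc a b) := by
  have hsub : polarCoord.symm '' (Ioi 0 ×ˢ Icc a b) ⊆ wedge a b :=
    image_mono (prod_mono Ioi_subset_Ici_self le_rfl)
  have hdiff : wedge a b \ polarCoord.symm '' (Ioi 0 ×ˢ Icc a b) ⊆ {0} := by
    rintro _ ⟨⟨⟨r, φ⟩, ⟨hr, hφ⟩, rfl⟩, hnot⟩
    obtain rfl : r = 0 := by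
      by_contra hr0
      exact hnot ⟨(r, φ), ⟨lt_of_le_of_ne hr (Ne.symm hr0), hφ⟩, rfl⟩
    simp [polarCoord_symm_apply]
  exact ae_eq_set.mpr ⟨measure_mono_null hdiff (measure_singleton 0),
    by rw [sdiff_eq_empty.mpr hsub, measure_empty]⟩

lemma setIntegral_wedge_eq_polar {E : Type*} [NormedAddCommGroup E] [NormedSpace ℝ E] {a b : ℝ}
    (hab : b - a < 2 * π) (f : ℝ × ℝ → E) :
    ∫ q in wedge a b, f q = ∫ p in Ioi 0 ×ˢ Icc a b, p.1 • f (polarCoord.symm p) := by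
  have hS : MeasurableSet (Ioi (0 : ℝ) ×ˢ Icc a b) := measurableSet_Ioi.prod measurableSet_Icc
  rw [setIntegral_congr_set (wedge_ae_eq_image a b),
    integral_image_eq_integral_abs_det_fderiv_smul volume hS
      (fun p _ => (hasFDerivAt_polarCoord_symm p).hasFDerivWithinAt)
      (injOn_polarCoord_symm_Ioi_prod_Icc hab)]
  refine setIntegral_congr_fun hS fun p hp => ?_
  rw [det_fderivPolarCoordSymm, abs_of_pos hp.1]

lemma integral_Ioi_sq_mul_exp_neg_sq_div_two :
    ∫ r in Ioi (0 : ℝ), r ^ 2 * exp (-r ^ 2 / 2) = √(2 * π) / 2 := by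
  have h := integral_rpow_mul_exp_neg_mul_rpow (p := 2) (q := 2) (b := 1 / 2)
    (by norm_num) (by norm_num) (by norm_num)
  have hΓ := Gamma_nat_add_one_add_half 0
  norm_num at h hΓ
  have h2 : (1 / 2 : ℝ) ^ (-(3 / 2 : ℝ)) = 2 * √2 := by
    rw [one_div, inv_rpow zero_le_two, ← rpow_neg zero_le_two, neg_neg,
      show (3 / 2 : ℝ) = 1 + 1 / 2 by norm_num, rpow_add two_pos, rpow_one, sqrt_eq_rpow]
  calc ∫ r in Ioi (0 : ℝ), r ^ 2 * exp (-r ^ 2 / 2)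
      = ∫ r in Ioi (0 : ℝ), r ^ 2 * exp (-(1 / 2 * r ^ 2)) := by ring_nf
    _ = √(2 * π) / 2 := by rw [h, h2, hΓ, sqrt_mul zero_le_two]; ring

lemma setIntegral_wedge_mul_exp_neg {a b : ℝ} (hab : b - a < 2 * π) (g : ℝ × ℝ → ℝ) (t : ℝ → ℝ)
    (hg : ∀ p : ℝ × ℝ, g (polarCoord.symm p) = p.1 * t p.2) :
    ∫ q in wedge a b, g q * exp (-(q.1 ^ 2 + q.2 ^ 2) / 2) =
      √(2 * π) / 2 * ∫ φ in Icc a b, t φ := by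
  rw [setIntegral_wedge_eq_polar hab, ← integral_Ioi_sq_mul_exp_neg_sq_div_two,
    ← setIntegral_prod_mul, ← Measure.volume_eq_prod]
  congr 1 with p
  rw [hg, polarCoord_symm_fst_sq_add_snd_sq, smul_eq_mul]
  ring

lemma setIntegral_wedge_fst_mul_exp_neg {a b : ℝ} (hab : a ≤ b) (hba : b - a < 2 * π) :
    ∫ q in wedge a b, q.1 * exp (-(q.1 ^ 2 + q.2 ^ 2) / 2) = √(2 * π) / 2 * (sin b - sin a) := by
  rw [setIntegral_wedge_mul_exp_neg hba Prod.fst cos (fun p => by rw [polarCoord_symm_apply]),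
    integral_Icc_eq_integral_Ioc, ← intervalIntegral.integral_of_le hab, integral_cos]

lemma setIntegral_wedge_snd_mul_exp_neg {a b : ℝ} (hab : a ≤ b) (hba : b - a < 2 * π) :
    ∫ q in wedge a b, q.2 * exp (-(q.1 ^ 2 + q.2 ^ 2) / 2) = √(2 * π) / 2 * (cos a - cos b) := by
  rw [setIntegral_wedge_mul_exp_neg hba Prod.snd sin (fun p => by rw [polarCoord_symm_apply]),
    integral_Icc_eq_integral_Ioc, ← intervalIntegral.integral_of_le hab, integral_sin]

lemma integrable_exp_neg_norm_sq_div_two_smul {E : Type*} [NormedAddCommGroup E]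
    [NormedSpace ℝ E] [FiniteDimensional ℝ E] [Nontrivial E] [MeasurableSpace E] [BorelSpace E]
    (μ : Measure E) [μ.IsAddHaarMeasure] :
    Integrable (fun x : E => exp (-‖x‖ ^ 2 / 2) • x) μ := by
  rw [← integrable_norm_iff (by fun_prop)]
  simp only [norm_smul, norm_of_nonneg (exp_pos _).le]
  refine (integrable_fun_norm_addHaar μ (f := fun y => exp (-y ^ 2 / 2) * y)).mpr ?_
  refine (integrableOn_rpow_mul_exp_neg_mul_sq (b := 1 / 2) (by norm_num)
    (s := Module.finrank ℝ E) (by linarith [(Module.finrank ℝ E).cast_nonneg (α := ℝ)])).congr_fun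
    (fun y (hy : 0 < y) => ?_) measurableSet_Ioi
  simp only [rpow_natCast, smul_eq_mul]
  rw [mul_comm (exp _) y, ← mul_assoc, ← pow_succ, Nat.sub_add_cancel Module.finrank_pos]
  ring_nf

/-- The coordinates `(z, (x₀, x₁)) ↦ (x₀, x₁, z)` adapted to vertical cylinders. -/
def cylinderCoords : ℝ × (ℝ × ℝ) ≃ᵐ E3 :=
  (MeasurableEquiv.prodCongr (MeasurableEquiv.refl ℝ) MeasurableEquiv.finTwoArrow.symm).trans
    ((MeasurableEquiv.piFinSuccAbove (fun _ : Fin 3 => ℝ) 2).symm.trans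
      (MeasurableEquiv.toLp 2 (Fin 3 → ℝ)))

def planeProj (x : E3) : ℝ × ℝ := (x 0, x 1)

lemma planeProj_cylinderCoords (p : ℝ × (ℝ × ℝ)) : planeProj (cylinderCoords p) = p.2 := rfl

lemma cylinderCoords_two (p : ℝ × (ℝ × ℝ)) : cylinderCoords p 2 = p.1 := rfl

lemma measurePreserving_cylinderCoords : MeasurePreserving cylinderCoords := by
  have h1 := ((EuclideanSpace.volume_preserving_symm_measurableEquiv_toLp (Fin 3)).symm)
  have h2 := (measurePreserving_piFinSuccAbove (fun _ : Fin 3 => (volume : Measure ℝ)) 2).symm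
  have h3 := ((MeasurePreserving.id (volume : Measure ℝ)).prod
      (volume_preserving_finTwoArrow ℝ).symm)
  exact h1.comp (h2.comp h3)

lemma setIntegral_preimage_planeProj_mul (W : Set (ℝ × ℝ)) (g : ℝ × ℝ → ℝ) (h : ℝ → ℝ) :
    ∫ x in planeProj ⁻¹' W, g (planeProj x) * h (x 2) = (∫ q in W, g q) * ∫ z, h z := by
  have hpre : cylinderCoords ⁻¹' (planeProj ⁻¹' W) = univ ×ˢ W := by
    ext p; simp [planeProj_cylinderCoords]
  rw [← measurePreserving_cylinderCoords.setIntegral_preimage_emb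
    cylinderCoords.measurableEmbedding, hpre]
  simp only [planeProj_cylinderCoords, cylinderCoords_two]
  rw [Measure.volume_eq_prod, mul_comm, ← setIntegral_univ (f := h)]
  simp_rw [mul_comm (g _)]
  exact setIntegral_prod_mul h g univ W

lemma norm_sq_eq_fin_three (x : E3) : ‖x‖ ^ 2 = (x 0 ^ 2 + x 1 ^ 2) + x 2 ^ 2 := by
  simp [EuclideanSpace.norm_sq_eq, Fin.sum_univ_three]

lemma integral_exp_neg_sq_div_two : ∫ z : ℝ, exp (-z ^ 2 / 2) = √(2 * π) := by
  simpa [neg_div, div_eq_inv_mul, div_inv_eq_mul, mul_comm π] using integral_gaussian (1 / 2)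

lemma integral_mul_exp_neg_sq_div_two : ∫ z : ℝ, z * exp (-z ^ 2 / 2) = 0 := by
  have h := integral_neg_eq_self (fun z : ℝ => z * exp (-z ^ 2 / 2)) volume
  simp only [neg_sq, neg_mul, integral_neg] at h
  linarith

lemma setIntegral_gaussian3_apply (s : Set E3) (k : Fin 3) :
    (∫ x in s, x ∂gaussian3) k = (√((2 * π) ^ 3))⁻¹ * ∫ x in s, x k * exp (-‖x‖ ^ 2 / 2) := by
  have hdens (x : E3) : (ENNReal.ofReal ((√((2 * π) ^ 3))⁻¹ * exp (-‖x‖ ^ 2 / 2))).toReal =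
      (√((2 * π) ^ 3))⁻¹ * exp (-‖x‖ ^ 2 / 2) := ENNReal.toReal_ofReal (by positivity)
  have hint : Integrable (fun x : E3 => ((√((2 * π) ^ 3))⁻¹ * exp (-‖x‖ ^ 2 / 2)) • x)
      (volume.restrict s) := by
    simpa only [mul_smul, Pi.smul_def] using
      ((integrable_exp_neg_norm_sq_div_two_smul volume).smul (√((2 * π) ^ 3))⁻¹).restrict
  rw [gaussian3, setIntegral_withDensity_eq_setIntegral_toReal_smul' s (by fun_prop)
    (ae_of_all _ fun _ => ENNReal.ofReal_lt_top)]
  simp_rw [hdens]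
  rw [eval_integral_piLp hint.eval_piLp, ← integral_const_mul]
  congr 1 with x
  simp only [PiLp.smul_apply, smul_eq_mul]
  ring

lemma setIntegral_preimage_planeProj_mul_exp_neg (W : Set (ℝ × ℝ)) (g : ℝ × ℝ → ℝ) (h : ℝ → ℝ) :
    ∫ x in planeProj ⁻¹' W, g (planeProj x) * h (x 2) * exp (-‖x‖ ^ 2 / 2) =
      (∫ q in W, g q * exp (-(q.1 ^ 2 + q.2 ^ 2) / 2)) * ∫ z, h z * exp (-z ^ 2 / 2) := by
  rw [← setIntegral_preimage_planeProj_mul]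
  congr 1 with x
  rw [norm_sq_eq_fin_three, neg_div, add_div, neg_add, exp_add]
  simp only [planeProj, neg_div]
  ring

lemma inv_sqrt_two_pi_pow_three_mul_sqrt : (√((2 * π) ^ 3))⁻¹ * √(2 * π) = (2 * π)⁻¹ := by
  have h2π : 0 < 2 * π := by positivity
  rw [pow_succ, sqrt_mul (by positivity), sqrt_sq h2π.le, mul_inv, mul_assoc,
    inv_mul_cancel₀ (sqrt_pos.mpr h2π).ne', mul_one]

lemma setIntegral_gaussian3_preimage_planeProj (W : Set (ℝ × ℝ)) :
    ∫ x in planeProj ⁻¹' W, x ∂gaussian3 = (2 * π)⁻¹ •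
      !₂[∫ q in W, q.1 * exp (-(q.1 ^ 2 + q.2 ^ 2) / 2),
        ∫ q in W, q.2 * exp (-(q.1 ^ 2 + q.2 ^ 2) / 2), 0] := by
  have hc := inv_sqrt_two_pi_pow_three_mul_sqrt
  ext k
  rw [setIntegral_gaussian3_apply]
  fin_cases k <;> simp only [PiLp.smul_apply, smul_eq_mul, Fin.zero_eta,
    Fin.mk_one, Fin.reduceFinMk, Fin.isValue, Matrix.cons_val_zero, Matrix.cons_val_one,
    Matrix.cons_val_two, Matrix.head_cons, Matrix.tail_cons]
  · have := setIntegral_preimage_planeProj_mul_exp_neg W Prod.fst (fun _ => 1)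
    simp only [planeProj, one_mul, mul_one, integral_exp_neg_sq_div_two] at this
    rw [this, ← hc]
    ring
  · have := setIntegral_preimage_planeProj_mul_exp_neg W Prod.snd (fun _ => 1)
    simp only [planeProj, one_mul, mul_one, integral_exp_neg_sq_div_two] at this
    rw [this, ← hc]
    ring
  · have := setIntegral_preimage_planeProj_mul_exp_neg W (fun _ => 1) id
    simp only [one_mul, id, integral_mul_exp_neg_sq_div_two, mul_zero] at this
    rw [this, mul_zero, mul_zero]

theorem norm_sq_setIntegral_gaussian3_preimage_planeProj_wedge {a b : ℝ} (hab : a ≤ b)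
    (hba : b - a < 2 * π) :
    ‖∫ x in planeProj ⁻¹' wedge a b, x ∂gaussian3‖ ^ 2 = (1 - cos (b - a)) / (4 * π) := by
  rw [setIntegral_gaussian3_preimage_planeProj, setIntegral_wedge_fst_mul_exp_neg hab hba,
    setIntegral_wedge_snd_mul_exp_neg hab hba, norm_smul, mul_pow, EuclideanSpace.norm_sq_eq,
    Fin.sum_univ_three]
  have h2π : 0 < 2 * π := by positivity
  have hsq : √(2 * π) ^ 2 = 2 * π := sq_sqrt h2π.le
  simp only [Real.norm_eq_abs, sq_abs, Matrix.cons_val_zero, Matrix.cons_val_one,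
    Matrix.cons_val_two, Matrix.head_cons, Matrix.tail_cons]
  rw [cos_sub]
  field_simp
  linear_combination (4 * (sin a ^ 2 + cos a ^ 2 + sin b ^ 2 + cos b ^ 2)
    - 8 * (sin a * sin b + cos a * cos b)) * hsq + 8 * π * sin_sq_add_cos_sq a
    + 8 * π * sin_sq_add_cos_sq b

/-- The propeller partition attains the bound `9/(8π)`: if `P₁, P₂, P₃ ⊆ ℝ²` are the
three closed `120°` sectors centered at the origin and `Aᵢ = Pᵢ × ℝ ⊆ ℝ³`, then
`∑_{i=1}^3 ‖∫_{Aᵢ} x dγ₃(x)‖² = 9/(8π)`. Here the sector with index `m ∈ {0,1,2}`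
(corresponding to `m ∈ {1,2,3}` shifted by one) is
`{(r cos φ, r sin φ) : r ≥ 0, φ ∈ [2πm/3 − π/3, 2πm/3 + π/3]}`. -/
theorem propeller_partition_attains_bound (A : Fin 3 → Set E3)
    (hA : ∀ m : Fin 3, A m =
      {x : E3 | ∃ r : ℝ, 0 ≤ r ∧ ∃ φ : ℝ,
        φ ∈ Set.Icc (2 * Real.pi * (m : ℕ) / 3 - Real.pi / 3)
          (2 * Real.pi * (m : ℕ) / 3 + Real.pi / 3) ∧
        x 0 = r * Real.cos φ ∧ x 1 = r * Real.sin φ}) :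
    ∑ m : Fin 3, ‖∫ x in A m, x ∂gaussian3‖ ^ 2 = 9 / (8 * Real.pi) := by
  have hπ := pi_pos
  have hcos : cos (2 * π / 3) = -(1 / 2) := by
    rw [show 2 * π / 3 = π - π / 3 by ring, cos_pi_sub, cos_pi_div_three]
  have hterm (m : Fin 3) : ‖∫ x in A m, x ∂gaussian3‖ ^ 2 = 3 / (8 * π) := by
    set α : ℝ := 2 * π * (m : ℕ) / 3
    have hAm : A m = planeProj ⁻¹' wedge (α - π / 3) (α + π / 3) := by
      rw [hA m]
      ext x
      simp only [mem_preimage, mem_wedge, planeProj]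
      rfl
    rw [hAm, norm_sq_setIntegral_gaussian3_preimage_planeProj_wedge (by linarith) (by linarith),
      show α + π / 3 - (α - π / 3) = 2 * π / 3 by ring, hcos]
    field_simp
    ring
  simp only [hterm, Finset.sum_const, Finset.card_univ, Fintype.card_fin, nsmul_eq_mul]
  ring
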